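/- Let K ≥ 5 and N ≥ 1 be integers. Define the points P_i = ((1 + i(K−1)/K)·N/K, N(K−i)/(K(i+1))) ∈ ℝ² for i ∈ {0,…,K} and Q_m = (mN/K, N(K−m)/(Km)) ∈ ℝ² for m ∈ {1, K−2, K−1, K}, and for j ∈ {1,…,K−1} define L_j(S) = N(K−j)/(Kj) − K(S − jN/K)/(j(j+1)). Then for every real S with N/K ≤ S ≤ N there exists a real R such that (S, R) lies in the convex hull of {P_0,…,P_K} ∪ {Q_1, Q_{K−2}, Q_{K−1}, Q_K} and 3(K−1)·R ≤ (3K−1)·max_{j ∈ {1,…,K−1}} L_j(S). -/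

import Mathlib

/-!
Every `P_i` with `1 ≤ i ≤ K` lies on the line `L_i`, between the corners `Q_i` and `Q_{i+1}`
of the piecewise linear lower bound `max_j L_j`, whose pieces are the segments `Q_j Q_{j+1}`.
For each `j` the points of the hull lying below `(3K-1)/(3(K-1)) · L_j` form a convex set, so
it suffices to cover `[N/K, N]` by segments with both ends in one such set: `Q_1 P_1` on `L_1`;
each chord `P_i P_{i+1}`, split at its point above the corner `Q_{i+1}`, where its height is
`(K - i/(i+2))/(K-1) ≤ (K - 1/3)/(K-1)` times that of the lower bound; and finally
`Q_{K-2} Q_{K-1}` and `Q_{K-1} Q_K`, which lie on the lower bound itself.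
-/

/-- The achievable storage-rate pair `P_i = ((1 + i(K−1)/K)·N/K, N(K−i)/(K(i+1)))` of the
structural-invariant coded shuffling scheme. -/
noncomputable def Ppt (K N i : ℕ) : ℝ × ℝ :=
  ((1 + (i : ℝ) * ((K : ℝ) - 1) / K) * N / K,
    (N : ℝ) * ((K : ℝ) - i) / ((K : ℝ) * ((i : ℝ) + 1)))

/-- The storage-rate point `Q_m = (mN/K, N(K−m)/(Km))` achieved by the aligned coded
shuffling scheme. -/
noncomputable def Qpt (K N m : ℕ) : ℝ × ℝ :=
  ((m : ℝ) * N / K, (N : ℝ) * ((K : ℝ) - m) / ((K : ℝ) * m))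

/-- The `j`-th lower-bound line on the worst-case communication rate:
`L_j(S) = N(K−j)/(Kj) − K(S − jN/K)/(j(j+1))`. -/
noncomputable def Lline (K N j : ℕ) (S : ℝ) : ℝ :=
  (N : ℝ) * ((K : ℝ) - (j : ℝ)) / ((K : ℝ) * (j : ℝ)) -
    (K : ℝ) * (S - (j : ℝ) * (N : ℝ) / (K : ℝ)) / ((j : ℝ) * ((j : ℝ) + 1))

lemma exists_prodMk_mem_of_mem_uIcc {C : Set (ℝ × ℝ)} (hC : Convex ℝ C) {p q : ℝ × ℝ}
    (hp : p ∈ C) (hq : q ∈ C) {S : ℝ} (hS : S ∈ Set.uIcc p.1 q.1) : ∃ R, (S, R) ∈ C := by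
  have hfst : Convex ℝ (Prod.fst '' C) := hC.linear_image (LinearMap.fst ℝ ℝ ℝ)
  obtain ⟨r, hr, rfl⟩ := hfst.ordConnected.uIcc_subset ⟨p, hp, rfl⟩ ⟨q, hq, rfl⟩ hS
  exact ⟨r.2, hr⟩

noncomputable def achievableHull (K N : ℕ) : Set (ℝ × ℝ) :=
  convexHull ℝ ((Ppt K N '' {i | i ≤ K}) ∪ (Qpt K N '' {1, K - 2, K - 1, K}))

def gapRegion (K N j : ℕ) : Set (ℝ × ℝ) :=
  {p | 3 * ((K : ℝ) - 1) * p.2 ≤ (3 * (K : ℝ) - 1) * Lline K N j p.1}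

/-- The point of the chord `P_i P_{i+1}` above the corner `Q_{i+1}` of the lower bound. -/
noncomputable def kinkPt (K N i : ℕ) : ℝ × ℝ :=
  (1 - (i : ℝ) / ((K : ℝ) - 1)) • Ppt K N i + ((i : ℝ) / ((K : ℝ) - 1)) • Ppt K N (i + 1)

def GapAchievable (K N : ℕ) (S : ℝ) : Prop :=
  ∃ R, (S, R) ∈ achievableHull K N ∧ ∃ j ∈ Finset.Icc 1 (K - 1), (S, R) ∈ gapRegion K N j

section

variable {K N : ℕ}

lemma Lline_mul_add_mul {j : ℕ} {a b : ℝ} (hab : a + b = 1) (x y : ℝ) :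
    Lline K N j (a * x + b * y) = a * Lline K N j x + b * Lline K N j y := by
  obtain rfl : b = 1 - a := by linarith
  simp only [Lline]
  ring

lemma Lline_Qpt_fst {j : ℕ} (hj : j ≠ 0) : Lline K N j (Qpt K N j).1 = (Qpt K N j).2 := by
  rcases eq_or_ne K 0 with rfl | hK
  · simp [Lline, Qpt]
  simp only [Lline, Qpt]
  field_simp
  ring

lemma Lline_Qpt_succ_fst {j : ℕ} (hj : j ≠ 0) :
    Lline K N j (Qpt K N (j + 1)).1 = (Qpt K N (j + 1)).2 := by
  rcases eq_or_ne K 0 with rfl | hK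
  · simp [Lline, Qpt]
  simp only [Lline, Qpt]
  push_cast
  field_simp
  ring

lemma Lline_Ppt_fst {i : ℕ} (hi : i ≠ 0) : Lline K N i (Ppt K N i).1 = (Ppt K N i).2 := by
  rcases eq_or_ne K 0 with rfl | hK
  · simp [Lline, Ppt]
  simp only [Lline, Ppt]
  field_simp
  ring

lemma Ppt_snd_nonneg {i : ℕ} (hi : i ≤ K) : 0 ≤ (Ppt K N i).2 := by
  have : (i : ℝ) ≤ K := by exact_mod_cast hi
  simp only [Ppt]
  exact div_nonneg (mul_nonneg (Nat.cast_nonneg _) (by linarith)) (by positivity)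

lemma Qpt_snd_nonneg {m : ℕ} (hm : m ≤ K) : 0 ≤ (Qpt K N m).2 := by
  have : (m : ℝ) ≤ K := by exact_mod_cast hm
  simp only [Qpt]
  exact div_nonneg (mul_nonneg (Nat.cast_nonneg _) (by linarith)) (by positivity)

lemma Ppt_fst_mem_uIcc {i : ℕ} (hi : i ≤ K) :
    (Ppt K N i).1 ∈ Set.uIcc (Qpt K N i).1 (Qpt K N (i + 1)).1 := by
  have hi' : (i : ℝ) ≤ K := by exact_mod_cast hi
  rcases Nat.eq_zero_or_pos K with rfl | hK
  · simp [Ppt, Qpt]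
  have hK' : (K : ℝ) ≠ 0 := by positivity
  have hleft : (Ppt K N i).1 - (Qpt K N i).1 = ((K : ℝ) - i) * N / K ^ 2 := by
    simp only [Ppt, Qpt]; field_simp; ring
  have hright : (Qpt K N (i + 1)).1 - (Ppt K N i).1 = (i : ℝ) * N / K ^ 2 := by
    simp only [Ppt, Qpt]; push_cast; field_simp; ring
  have : 0 ≤ ((K : ℝ) - i) * N / K ^ 2 :=
    div_nonneg (mul_nonneg (by linarith) (Nat.cast_nonneg N)) (by positivity)
  refine Set.mem_uIcc.mpr (Or.inl ⟨by linarith, ?_⟩)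
  have : 0 ≤ (i : ℝ) * N / K ^ 2 := by positivity
  linarith

lemma Ppt_mem_achievableHull {i : ℕ} (hi : i ≤ K) : Ppt K N i ∈ achievableHull K N :=
  subset_convexHull ℝ _ (Or.inl ⟨i, hi, rfl⟩)

lemma Qpt_mem_achievableHull {m : ℕ} (hm : m ∈ ({1, K - 2, K - 1, K} : Set ℕ)) :
    Qpt K N m ∈ achievableHull K N :=
  subset_convexHull ℝ _ (Or.inr ⟨m, hm, rfl⟩)

lemma kinkPt_mem_achievableHull {i : ℕ} (hi : i + 1 ≤ K) : kinkPt K N i ∈ achievableHull K N := by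
  have hiK : (i : ℝ) ≤ (K : ℝ) - 1 := by
    have : ((i + 1 : ℕ) : ℝ) ≤ K := by exact_mod_cast hi
    push_cast at this; linarith
  have ht : (i : ℝ) / ((K : ℝ) - 1) ≤ 1 := div_le_one_of_le₀ hiK (by linarith)
  exact convex_convexHull ℝ _ (Ppt_mem_achievableHull (by omega))
    (Ppt_mem_achievableHull hi) (by linarith)
    (div_nonneg (Nat.cast_nonneg i) (by linarith)) (by ring)

lemma kinkPt_fst {i : ℕ} (hK : 2 ≤ K) : (kinkPt K N i).1 = (Qpt K N (i + 1)).1 := by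
  have hK' : (2 : ℝ) ≤ K := by exact_mod_cast hK
  have : (K : ℝ) - 1 ≠ 0 := by linarith
  simp only [kinkPt, Ppt, Qpt, Prod.fst_add, Prod.smul_fst, smul_eq_mul]
  push_cast
  field_simp
  ring

/-- Where the constant `K - 1/3` of the theorem comes from: the worst case is `i = 1`. -/
lemma sub_one_mul_kinkPt_snd {i : ℕ} (hK : 2 ≤ K) :
    ((K : ℝ) - 1) * (kinkPt K N i).2 = ((K : ℝ) - i / (i + 2)) * (Qpt K N (i + 1)).2 := by
  have hK' : (2 : ℝ) ≤ K := by exact_mod_cast hK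
  have : (K : ℝ) - 1 ≠ 0 := by linarith
  simp only [kinkPt, Ppt, Qpt, Prod.snd_add, Prod.smul_snd, smul_eq_mul]
  push_cast
  field_simp
  ring

lemma kinkPt_snd_le {i : ℕ} (hi : 1 ≤ i) (hiK : i + 1 ≤ K) :
    3 * ((K : ℝ) - 1) * (kinkPt K N i).2 ≤ (3 * (K : ℝ) - 1) * (Qpt K N (i + 1)).2 := by
  have hi' : (1 : ℝ) ≤ i := by exact_mod_cast hi
  have hfrac : 1 / 3 ≤ (i : ℝ) / (i + 2) := by
    rw [div_le_div_iff₀ (by norm_num) (by positivity)]; linarith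
  have hQ := Qpt_snd_nonneg (N := N) hiK
  calc 3 * ((K : ℝ) - 1) * (kinkPt K N i).2
      = 3 * ((K : ℝ) - i / (i + 2)) * (Qpt K N (i + 1)).2 := by
        rw [mul_assoc, sub_one_mul_kinkPt_snd (by omega)]; ring
    _ ≤ (3 * (K : ℝ) - 1) * (Qpt K N (i + 1)).2 := by
        gcongr; linarith

lemma mem_gapRegion {j : ℕ} {p : ℝ × ℝ} :
    p ∈ gapRegion K N j ↔ 3 * ((K : ℝ) - 1) * p.2 ≤ (3 * (K : ℝ) - 1) * Lline K N j p.1 :=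
  Iff.rfl

lemma convex_gapRegion (j : ℕ) : Convex ℝ (gapRegion K N j) := by
  intro p hp q hq a b ha hb hab
  simp only [mem_gapRegion, Prod.fst_add, Prod.snd_add, Prod.smul_fst, Prod.smul_snd,
    smul_eq_mul] at *
  rw [Lline_mul_add_mul hab]
  nlinarith [mul_le_mul_of_nonneg_left hp ha, mul_le_mul_of_nonneg_left hq hb]

lemma mem_gapRegion_of_Lline_eq {j : ℕ} {p : ℝ × ℝ} (hp : Lline K N j p.1 = p.2)
    (h0 : 0 ≤ p.2) : p ∈ gapRegion K N j := by
  rw [mem_gapRegion, hp]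
  linarith

lemma kinkPt_mem_gapRegion {i j : ℕ} (hi : 1 ≤ i) (hiK : i + 1 ≤ K)
    (hj : Lline K N j (Qpt K N (i + 1)).1 = (Qpt K N (i + 1)).2) :
    kinkPt K N i ∈ gapRegion K N j := by
  rw [mem_gapRegion, kinkPt_fst (by omega), hj]
  exact kinkPt_snd_le hi hiK

lemma gapAchievable_of_mem_uIcc {j : ℕ} (hj : j ∈ Finset.Icc 1 (K - 1)) {p q : ℝ × ℝ}
    (hp : p ∈ achievableHull K N ∩ gapRegion K N j)
    (hq : q ∈ achievableHull K N ∩ gapRegion K N j) {S : ℝ} (hS : S ∈ Set.uIcc p.1 q.1) :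
    GapAchievable K N S := by
  obtain ⟨R, hR, hRj⟩ := exists_prodMk_mem_of_mem_uIcc
    ((convex_convexHull ℝ _).inter (convex_gapRegion j)) hp hq hS
  exact ⟨R, hR, j, hj, hRj⟩

lemma gapAchievable_of_mem_uIcc_Qpt_one_Ppt_one (hK : 2 ≤ K) {S : ℝ}
    (hS : S ∈ Set.uIcc (Qpt K N 1).1 (Ppt K N 1).1) : GapAchievable K N S :=
  gapAchievable_of_mem_uIcc (Finset.mem_Icc.mpr ⟨le_rfl, by omega⟩)
    ⟨Qpt_mem_achievableHull (by simp),
      mem_gapRegion_of_Lline_eq (Lline_Qpt_fst one_ne_zero) (Qpt_snd_nonneg (by omega))⟩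
    ⟨Ppt_mem_achievableHull (by omega),
      mem_gapRegion_of_Lline_eq (Lline_Ppt_fst one_ne_zero) (Ppt_snd_nonneg (by omega))⟩ hS

lemma gapAchievable_of_mem_uIcc_Ppt_Ppt {i : ℕ} (hi : 1 ≤ i) (hiK : i + 2 ≤ K) {S : ℝ}
    (hS : S ∈ Set.uIcc (Ppt K N i).1 (Ppt K N (i + 1)).1) : GapAchievable K N S := by
  have hP : Ppt K N i ∈ achievableHull K N := Ppt_mem_achievableHull (by omega)
  have hP' : Ppt K N (i + 1) ∈ achievableHull K N := Ppt_mem_achievableHull (by omega)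
  have hC : kinkPt K N i ∈ achievableHull K N := kinkPt_mem_achievableHull (by omega)
  rcases Set.uIcc_subset_uIcc_union_uIcc (b := (kinkPt K N i).1) hS with hS | hS
  · refine gapAchievable_of_mem_uIcc (Finset.mem_Icc.mpr ⟨hi, by omega⟩)
      ⟨hP, mem_gapRegion_of_Lline_eq (Lline_Ppt_fst (by omega))
        (Ppt_snd_nonneg (i := i) (by omega))⟩
      ⟨hC, kinkPt_mem_gapRegion hi (by omega) (Lline_Qpt_succ_fst (by omega))⟩ hS
  · refine gapAchievable_of_mem_uIcc (Finset.mem_Icc.mpr ⟨by omega, by omega⟩)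
      ⟨hC, kinkPt_mem_gapRegion hi (by omega) (Lline_Qpt_fst (by omega))⟩
      ⟨hP', mem_gapRegion_of_Lline_eq (Lline_Ppt_fst (by omega))
        (Ppt_snd_nonneg (i := i + 1) (by omega))⟩ hS

lemma gapAchievable_of_mem_uIcc_Ppt_one {i : ℕ} (hi : 1 ≤ i) (hiK : i + 1 ≤ K) {S : ℝ}
    (hS : S ∈ Set.uIcc (Ppt K N 1).1 (Ppt K N i).1) : GapAchievable K N S := by
  induction i, hi using Nat.le_induction generalizing S with
  | base =>
    have hP : Ppt K N 1 ∈ achievableHull K N := Ppt_mem_achievableHull (by omega)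
    have hPg : Ppt K N 1 ∈ gapRegion K N 1 :=
      mem_gapRegion_of_Lline_eq (Lline_Ppt_fst one_ne_zero) (Ppt_snd_nonneg (by omega))
    exact gapAchievable_of_mem_uIcc (Finset.mem_Icc.mpr ⟨le_rfl, by omega⟩) ⟨hP, hPg⟩ ⟨hP, hPg⟩ hS
  | succ i hi ih =>
    rcases Set.uIcc_subset_uIcc_union_uIcc (b := (Ppt K N i).1) hS with hS | hS
    · exact ih (by omega) hS
    · exact gapAchievable_of_mem_uIcc_Ppt_Ppt hi (by omega) hS

lemma gapAchievable_of_mem_uIcc_Qpt_Qpt {j : ℕ} (hj : 1 ≤ j) (hjK : j + 1 ≤ K)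
    (hQ : j ∈ ({1, K - 2, K - 1, K} : Set ℕ)) (hQ' : j + 1 ∈ ({1, K - 2, K - 1, K} : Set ℕ))
    {S : ℝ} (hS : S ∈ Set.uIcc (Qpt K N j).1 (Qpt K N (j + 1)).1) : GapAchievable K N S :=
  gapAchievable_of_mem_uIcc (Finset.mem_Icc.mpr ⟨hj, by omega⟩)
    ⟨Qpt_mem_achievableHull hQ,
      mem_gapRegion_of_Lline_eq (Lline_Qpt_fst (by omega)) (Qpt_snd_nonneg (m := j) (by omega))⟩
    ⟨Qpt_mem_achievableHull hQ',
      mem_gapRegion_of_Lline_eq (Lline_Qpt_succ_fst (by omega)) (Qpt_snd_nonneg hjK)⟩ hS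

end

/-- Theorem 4 (convex-geometric form) for `K ≥ 5`: for every storage `S ∈ [N/K, N]` there
is a rate `R` with `(S, R)` in the convex hull of the achievable points
`{P_0,…,P_K} ∪ {Q_1, Q_{K−2}, Q_{K−1}, Q_K}` such that
`3(K−1)·R ≤ (3K−1)·max_{1 ≤ j ≤ K−1} L_j(S)`, i.e. the achievable rate is within a factor
`(K − 1/3)/(K − 1)` of the lower bound. -/
theorem aligned_achievable_within_gap (K N : ℕ) (hK : 5 ≤ K) :
    ∀ S : ℝ, (N : ℝ) / K ≤ S → S ≤ (N : ℝ) →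
      ∃ R : ℝ, (S, R) ∈ convexHull ℝ
          ((Ppt K N '' {i | i ≤ K}) ∪ (Qpt K N '' {1, K - 2, K - 1, K})) ∧
        3 * ((K : ℝ) - 1) * R ≤
          (3 * (K : ℝ) - 1) * (Finset.Icc 1 (K - 1)).sup'
            (Finset.nonempty_Icc.mpr (by omega)) (fun j => Lline K N j S) := by
  intro S hS1 hS2
  have hS : S ∈ Set.uIcc (Qpt K N 1).1 (Qpt K N K).1 := by
    have hK0 : (K : ℝ) ≠ 0 := by positivity
    refine Set.Icc_subset_uIcc ⟨?_, ?_⟩ <;> simpa [Qpt, hK0]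
  have hK2 : K - 2 + 1 = K - 1 := by omega
  have hK1 : K - 1 + 1 = K := by omega
  have hGap : GapAchievable K N S := by
    rcases Set.uIcc_subset_uIcc_union_uIcc (b := (Ppt K N 1).1) hS with hS | hS
    · exact gapAchievable_of_mem_uIcc_Qpt_one_Ppt_one (by omega) hS
    rcases Set.uIcc_subset_uIcc_union_uIcc (b := (Ppt K N (K - 2)).1) hS with hS | hS
    · exact gapAchievable_of_mem_uIcc_Ppt_one (by omega) (by omega) hS
    rcases Set.uIcc_subset_uIcc_union_uIcc (b := (Qpt K N (K - 1)).1) hS with hS | hS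
    · refine gapAchievable_of_mem_uIcc_Qpt_Qpt (j := K - 2) (by omega) (by omega) (by simp)
        (by simp [hK2]) ?_
      rw [hK2]
      exact Set.uIcc_subset_uIcc (hK2 ▸ Ppt_fst_mem_uIcc (by omega)) Set.right_mem_uIcc hS
    · exact gapAchievable_of_mem_uIcc_Qpt_Qpt (j := K - 1) (by omega) (by omega) (by simp)
        (by simp [hK1]) (by rwa [hK1])
  obtain ⟨R, hR, j, hj, hRj⟩ := hGap
  have hK' : (5 : ℝ) ≤ K := by exact_mod_cast hK
  exact ⟨R, hR, hRj.trans (mul_le_mul_of_nonneg_left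
    (Finset.le_sup' (fun j => Lline K N j S) hj) (by linarith))⟩
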